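/- Let K be an algebraically closed field of characteristic ≠ 2, let X ⊆ K^4 be the affine variety defined by the equations x_1² = x_3², x_2² = x_4², x_1 x_2 = x_3 x_4, x_1 x_4 = x_2 x_3, and let the group G of order 2 generated by diag(1,1,−1,−1) ∈ GL_4(K) act on X. Then X is the union of the two planes V(x_1 − x_3, x_2 − x_4) and V(x_1 + x_3, x_2 + x_4), which meet only at the origin, the non-identity element of G interchanges these two planes (so fixes only the origin, and G is not generated by reflections on X), and the invariant ring K[X]^G is the polynomial ring K[x̄_1, x̄_2] generated by the images of x_1 and x_2. -/

import Mathlib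

open TopologicalSpace

/-- The chain-theoretic codimension of `A` inside `Y`: the infimum, over all
irreducible closed subsets `Z` of `Y` contained in `A`, of the coheight of `Z`
in the poset of irreducible closed subsets of `Y`. -/
noncomputable def codimIn {α : Type*} [TopologicalSpace α] (Y A : Set α) : ℕ∞ :=
  ⨅ (Z : IrreducibleCloseds ↥Y) (_ : (Z : Set ↥Y) ⊆ (Subtype.val ⁻¹' A)), Order.coheight Z

/-- `Y` is connected in codimension `k`: removing any closed subset of
codimension `> k` leaves a connected set. -/
def ConnectedInCodim {α : Type*} [TopologicalSpace α] (Y : Set α) (k : ℕ∞) : Prop :=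
  ∀ A : Set α, IsClosed A → k < codimIn Y A → IsConnected (Y \ A)

/-- `Z` is an irreducible component of `Y` (a maximal irreducible subset of `Y`). -/
def IsIrredCompOf {α : Type*} [TopologicalSpace α] (Z Y : Set α) : Prop :=
  Maximal (fun S => S ⊆ Y ∧ IsIrreducible S) Z

variable {K : Type*} [Field K]

/-- The Zariski topology on affine space `σ → K`. -/
instance zariskiTopology (σ : Type*) : TopologicalSpace (σ → K) :=
  .generateFrom {U | ∃ I : Ideal (MvPolynomial σ K), U = (MvPolynomial.zeroLocus K I)ᶜ}

variable {m : ℕ}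

/-- `f : X → K` is a regular function on `X` (the restriction of a polynomial). -/
def IsRegularFn (X : Set (Fin m → K)) (f : ↥X → K) : Prop :=
  ∃ p : MvPolynomial (Fin m) K, ∀ x : ↥X, f x = MvPolynomial.eval (x : Fin m → K) p

variable (G : Type*) [Group G]

/-- The `G`-action on `X` is by morphisms (hence automorphisms) of varieties. -/
def IsRegularAction (X : Set (Fin m → K)) [MulAction G ↥X] : Prop :=
  ∀ (σ : G) (i : Fin m), IsRegularFn X (fun x => ((σ • x : ↥X) : Fin m → K) i)

/-- `f : X → K` is a `G`-invariant function. -/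
def IsInvariantFn (X : Set (Fin m → K)) [MulAction G ↥X] (f : ↥X → K) : Prop :=
  ∀ (σ : G) (x : ↥X), f (σ • x) = f x

/-- The separating variety `V_sep ⊆ X × X`, inside `K^m × K^m 'K^{m ⊕ m}`. -/
def sepVariety (X : Set (Fin m → K)) [MulAction G ↥X] : Set ((Fin m ⊕ Fin m) → K) :=
  {z | ∃ x y : ↥X, z = Sum.elim (x : Fin m → K) (y : Fin m → K) ∧
    ∀ f : ↥X → K, IsRegularFn X f → IsInvariantFn G X f → f x = f y}

/-- `X × X` inside `K^{m ⊕ m}`. -/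
def prodXX (X : Set (Fin m → K)) : Set ((Fin m ⊕ Fin m) → K) :=
  {z | ∃ x ∈ X, ∃ y ∈ X, z = Sum.elim x y}

/-- The graph `H_{σ,Y} = {(x, σx) | x ∈ Y}` of `σ` over a subset `Y ⊆ X`. -/
def graphComp (X : Set (Fin m → K)) [MulAction G ↥X] (σ : G) (Y : Set (Fin m → K)) :
    Set ((Fin m ⊕ Fin m) → K) :=
  {z | ∃ x : ↥X, (x : Fin m → K) ∈ Y ∧
    z = Sum.elim (x : Fin m → K) ((σ • x : ↥X) : Fin m → K)}

/-- The fixed-point set `X^σ`, as a subset of the ambient affine space. -/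
def fixedPts (X : Set (Fin m → K)) [MulAction G ↥X] (σ : G) : Set (Fin m → K) :=
  {v | ∃ h : v ∈ X, σ • (⟨v, h⟩ : ↥X) = ⟨v, h⟩}

/-- A set `S` of functions on `X` separates as well as all invariants do. -/
def IsSeparating (X : Set (Fin m → K)) [MulAction G ↥X] (S : Set (↥X → K)) : Prop :=
  ∀ x y : ↥X, (∃ f : ↥X → K, IsRegularFn X f ∧ IsInvariantFn G X f ∧ f x ≠ f y) →
    ∃ g ∈ S, g x ≠ g y

/-- A regular (polynomial) map between algebraic sets. -/
def IsRegularMap {α β : Type*} (A : Set (α → K)) (B : Set (β → K)) (φ : ↥A → ↥B) : Prop :=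
  ∀ j : β, ∃ p : MvPolynomial α K, ∀ x : ↥A, (φ x : β → K) j = MvPolynomial.eval (x : α → K) p

/-- Isomorphism of algebraic sets (mutually inverse regular maps). -/
def VarIso {α β : Type*} (A : Set (α → K)) (B : Set (β → K)) : Prop :=
  ∃ (φ : ↥A → ↥B) (ψ : ↥B → ↥A), IsRegularMap A B φ ∧ IsRegularMap B A ψ ∧
    Function.LeftInverse ψ φ ∧ Function.RightInverse ψ φ

/-!
The four equations say that `(x₁ - x₃)(x₁ + x₃)`, `(x₂ - x₄)(x₂ + x₄)`, `(x₁ - x₃)(x₂ + x₄)` and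
`(x₂ - x₄)(x₁ + x₃)` vanish, so `X` is the union of the planes `x₁ = x₃, x₂ = x₄` and
`x₁ = -x₃, x₂ = -x₄`, which the sign change swaps. An invariant function is therefore determined
by its restriction to the first plane, where it is a polynomial in `x₁, x₂`; and `x₁, x₂` are
free coordinates on that plane, hence algebraically independent. The fixed locus is the origin,
which sits at the bottom of the chain point ⊂ line ⊂ plane of irreducible closed subsets of `X`,
so it has codimension at least `2`.
-/

open MvPolynomial

namespace MvPolynomial

theorem eval_bind₁ {R σ τ : Type*} [CommSemiring R] (x : τ → R) (P : σ → MvPolynomial τ R)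
    (p : MvPolynomial σ R) : eval x (bind₁ P p) = eval (fun i => eval x (P i)) p :=
  aeval_bind₁ x P p

theorem aeval_pi_apply {R ι α : Type*} [CommSemiring R] (w : ι → α → R)
    (q : MvPolynomial ι R) (x : α) : aeval w q x = eval (fun i => w i x) q :=
  DFunLike.congr_fun (comp_aeval (f := w) (Pi.evalAlgHom R (fun _ => R) x)) q

end MvPolynomial

section Zariski

variable {σ τ : Type*}

theorem isClosed_zeroLocus (I : Ideal (MvPolynomial σ K)) : IsClosed (zeroLocus K I) :=
  ⟨isOpen_generateFrom_of_mem ⟨I, rfl⟩⟩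

theorem isClosed_setOf_eval_eq (p q : MvPolynomial σ K) :
    IsClosed {v : σ → K | eval v p = eval v q} := by
  convert isClosed_zeroLocus (Ideal.span {p - q}) using 1
  ext v
  simp [zeroLocus_span, sub_eq_zero]

theorem isClosed_setOf_apply_eq_apply (i j : σ) : IsClosed {v : σ → K | v i = v j} := by
  simpa using isClosed_setOf_eval_eq (X i : MvPolynomial σ K) (X j)

instance : T1Space (σ → K) := by
  refine ⟨fun a => ?_⟩
  have : {a} = ⋂ i, {v : σ → K | eval v (X i) = eval v (C (a i))} := by
    ext v
    simp [funext_iff]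
  rw [this]
  exact isClosed_iInter fun i => isClosed_setOf_eval_eq _ _

theorem continuous_eval_polys (P : τ → MvPolynomial σ K) :
    Continuous fun v i => eval v (P i) := by
  refine continuous_generateFrom_iff.mpr ?_
  rintro _ ⟨I, rfl⟩
  rw [Set.preimage_compl, isOpen_compl_iff]
  have : (fun v i => eval v (P i)) ⁻¹' zeroLocus K I =
      ⋂ p ∈ I, {v | eval v (bind₁ P p) = eval v 0} := by
    ext v
    simp [eval_bind₁]
  rw [this]
  exact isClosed_biInter fun p _ => isClosed_setOf_eval_eq _ _

theorem exists_eval_ne_zero_subset_of_isOpen {U : Set (σ → K)} (hU : IsOpen U) {x : σ → K}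
    (hx : x ∈ U) : ∃ p : MvPolynomial σ K, eval x p ≠ 0 ∧ {v | eval v p ≠ 0} ⊆ U := by
  induction hU generalizing x with
  | basic s hs =>
    obtain ⟨I, rfl⟩ := hs
    simp only [Set.mem_compl_iff, mem_zeroLocus_iff, not_forall] at hx
    obtain ⟨p, hpI, hpx⟩ := hx
    exact ⟨p, hpx, fun v hv hv' => hv (hv' p hpI)⟩
  | univ => exact ⟨1, by simp, Set.subset_univ _⟩
  | inter s t _ _ ihs iht =>
    obtain ⟨p, hp, hps⟩ := ihs hx.1
    obtain ⟨q, hq, hqt⟩ := iht hx.2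
    refine ⟨p * q, by simp [hp, hq], fun v hv => ?_⟩
    replace hv : eval v p * eval v q ≠ 0 := by simpa using hv
    exact ⟨hps (left_ne_zero_of_mul hv), hqt (right_ne_zero_of_mul hv)⟩
  | sUnion S _ ih =>
    obtain ⟨t, htS, hxt⟩ := hx
    obtain ⟨p, hp, hpt⟩ := ih t htS hxt
    exact ⟨p, hp, hpt.trans (Set.subset_sUnion_of_mem htS)⟩

theorem isIrreducible_univ_of_infinite [Infinite K] :
    IsIrreducible (Set.univ : Set (σ → K)) := by
  refine ⟨⟨0, trivial⟩, fun u v hu hv ⟨x, _, hxu⟩ ⟨y, _, hyv⟩ => ?_⟩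
  obtain ⟨p, hp, hpu⟩ := exists_eval_ne_zero_subset_of_isOpen hu hxu
  obtain ⟨q, hq, hqv⟩ := exists_eval_ne_zero_subset_of_isOpen hv hyv
  -- over an infinite field a nonzero polynomial has a non-root
  have hpq : p * q ≠ 0 := mul_ne_zero (by rintro rfl; simp at hp) (by rintro rfl; simp at hq)
  obtain ⟨z, hz⟩ : ∃ z, eval z (p * q) ≠ 0 := by
    by_contra! h
    exact hpq (MvPolynomial.funext fun z => by simp [h z])
  rw [map_mul] at hz
  exact ⟨z, trivial, hpu (left_ne_zero_of_mul hz), hqv (right_ne_zero_of_mul hz)⟩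

theorem isIrreducible_range_eval_polys [Infinite K] (P : τ → MvPolynomial σ K) :
    IsIrreducible (Set.range fun v i => eval v (P i)) := by
  simpa using isIrreducible_univ_of_infinite.image _ (continuous_eval_polys P).continuousOn

end Zariski

section Subspace

variable {α : Type*} [TopologicalSpace α] {Y S T : Set α}

theorem IsIrreducible.preimage_val (hS : IsIrreducible S) (hSY : S ⊆ Y) :
    IsIrreducible (Subtype.val ⁻¹' S : Set Y) := by
  have := (Subtype.irreducibleSpace hS).isIrreducible_univ.image (Set.inclusion hSY)
    (continuous_inclusion hSY).continuousOn
  rwa [Set.image_univ, Set.range_inclusion] at this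

def IrreducibleCloseds.ofSubset (hSY : S ⊆ Y) (hS : IsIrreducible S) (hc : IsClosed S) :
    IrreducibleCloseds Y :=
  ⟨Subtype.val ⁻¹' S, hS.preimage_val hSY, hc.preimage continuous_subtype_val⟩

theorem IrreducibleCloseds.ofSubset_lt_ofSubset (hSY : S ⊆ Y) (hTY : T ⊆ Y) (hST : S ⊂ T)
    (hS : IsIrreducible S) (hSc : IsClosed S) (hT : IsIrreducible T) (hTc : IsClosed T) :
    ofSubset hSY hS hSc < ofSubset hTY hT hTc := by
  rw [← SetLike.coe_ssubset_coe]
  refine ⟨fun _ hx => hST.1 hx, fun h => hST.2 fun x hx => ?_⟩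
  exact h (show (⟨x, hTY hx⟩ : Y) ∈ Subtype.val ⁻¹' T from hx)

theorem coheight_le_codimIn {A : Set α} (hA : (Subtype.val ⁻¹' A : Set Y).Subsingleton)
    {Z : IrreducibleCloseds Y} (hZ : (Z : Set Y) ⊆ Subtype.val ⁻¹' A) :
    Order.coheight Z ≤ codimIn Y A := by
  refine le_iInf₂ fun Z' hZ' => le_of_eq (congrArg _ ?_)
  obtain ⟨z, hz⟩ := Z.isIrreducible.nonempty
  obtain ⟨z', hz'⟩ := Z'.isIrreducible.nonempty
  ext y
  constructor <;> intro hy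
  · rwa [hA (hZ hy) (hZ' hz')]
  · rwa [hA (hZ' hy) (hZ hz)]

end Subspace

section FunctionAlgebra

variable {ι α : Type*}

theorem mem_adjoin_range_iff_exists_eval (w : ι → α → K) (f : α → K) :
    f ∈ Algebra.adjoin K (Set.range w) ↔
      ∃ q : MvPolynomial ι K, ∀ x, f x = eval (fun i => w i x) q := by
  simp only [Algebra.adjoin_range_eq_range_aeval, AlgHom.mem_range, funext_iff, aeval_pi_apply,
    eq_comm (a := f _)]

theorem algebraicIndependent_of_surjective [Infinite K] (w : ι → α → K)
    (hw : Function.Surjective fun x i => w i x) : AlgebraicIndependent K w := by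
  refine algebraicIndependent_iff.mpr fun q hq => MvPolynomial.funext fun z => ?_
  obtain ⟨x, rfl⟩ := hw z
  simpa [aeval_pi_apply] using congrFun hq x

end FunctionAlgebra

theorem eq_zero_of_eq_neg (h2 : (2 : K) ≠ 0) {a : K} (h : a = -a) : a = 0 :=
  (mul_eq_zero.mp (by linear_combination h : 2 * a = 0)).resolve_left h2

section TwoPlanes

variable (K) in
def twoPlanes : Set (Fin 4 → K) :=
  {v | v 0 ^ 2 = v 2 ^ 2 ∧ v 1 ^ 2 = v 3 ^ 2 ∧ v 0 * v 1 = v 2 * v 3 ∧ v 0 * v 3 = v 1 * v 2}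

variable (K) in
def diagPlane : Set (Fin 4 → K) := {v | v 0 = v 2 ∧ v 1 = v 3}

variable (K) in
def antidiagPlane : Set (Fin 4 → K) := {v | v 0 = -v 2 ∧ v 1 = -v 3}

variable (K) in
def diagLine : Set (Fin 4 → K) := {v | v 0 = v 2 ∧ v 1 = v 3 ∧ v 0 = v 1}

def negLastTwo (v : Fin 4 → K) : Fin 4 → K := ![v 0, v 1, -v 2, -v 3]

theorem twoPlanes_eq_union : twoPlanes K = diagPlane K ∪ antidiagPlane K := by
  ext v
  simp only [twoPlanes, diagPlane, antidiagPlane, Set.mem_union, Set.mem_ofPred_eq]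
  constructor
  · rintro ⟨e1, e2, e3, e4⟩
    have hac : (v 0 - v 2) * (v 0 + v 2) = 0 := by linear_combination e1
    have hbd : (v 1 - v 3) * (v 1 + v 3) = 0 := by linear_combination e2
    have had : (v 0 - v 2) * (v 1 + v 3) = 0 := by linear_combination e3 + e4
    have hbc : (v 1 - v 3) * (v 0 + v 2) = 0 := by linear_combination e3 - e4
    by_cases h : v 0 - v 2 = 0 ∧ v 1 - v 3 = 0
    · exact Or.inl ⟨sub_eq_zero.mp h.1, sub_eq_zero.mp h.2⟩
    · have hcd : v 0 + v 2 = 0 ∧ v 1 + v 3 = 0 := by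
        rcases not_and_or.mp h with ha | hb
        · exact ⟨(mul_eq_zero.mp hac).resolve_left ha, (mul_eq_zero.mp had).resolve_left ha⟩
        · exact ⟨(mul_eq_zero.mp hbc).resolve_left hb, (mul_eq_zero.mp hbd).resolve_left hb⟩
      exact Or.inr ⟨eq_neg_of_add_eq_zero_left hcd.1, eq_neg_of_add_eq_zero_left hcd.2⟩
  · rintro (⟨h0, h1⟩ | ⟨h0, h1⟩) <;> refine ⟨?_, ?_, ?_, ?_⟩ <;>
      simp only [h0, h1] <;> ring

theorem diagPlane_subset_twoPlanes : diagPlane K ⊆ twoPlanes K :=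
  twoPlanes_eq_union (K := K) ▸ Set.subset_union_left

theorem diagPlane_inter_antidiagPlane (h2 : (2 : K) ≠ 0) :
    diagPlane K ∩ antidiagPlane K = {0} := by
  ext v
  simp only [diagPlane, antidiagPlane, Set.mem_inter_iff, Set.mem_ofPred_eq,
    Set.mem_singleton_iff]
  constructor
  · rintro ⟨⟨h0, h1⟩, h0', h1'⟩
    have hv2 : v 2 = 0 := eq_zero_of_eq_neg h2 (h0 ▸ h0')
    have hv3 : v 3 = 0 := eq_zero_of_eq_neg h2 (h1 ▸ h1')
    ext i
    fin_cases i <;> simp [h0, h1, hv2, hv3]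
  · rintro rfl
    simp

theorem negLastTwo_involutive : Function.Involutive (negLastTwo (K := K)) := fun v => by
  ext i
  fin_cases i <;> simp [negLastTwo]

theorem image_negLastTwo_diagPlane : negLastTwo '' diagPlane K = antidiagPlane K := by
  rw [negLastTwo_involutive.image_eq_preimage_symm]
  ext v
  simp [negLastTwo, diagPlane, antidiagPlane]

theorem image_negLastTwo_antidiagPlane : negLastTwo '' antidiagPlane K = diagPlane K := by
  rw [negLastTwo_involutive.image_eq_preimage_symm]
  ext v
  simp [negLastTwo, diagPlane, antidiagPlane]

theorem setOf_mem_twoPlanes_negLastTwo_eq_self (h2 : (2 : K) ≠ 0) :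
    {v ∈ twoPlanes K | negLastTwo v = v} = {0} := by
  ext v
  simp only [Set.mem_ofPred_eq, Set.mem_singleton_iff]
  constructor
  · rintro ⟨⟨e0, e1, -, -⟩, hv⟩
    have hv2 : v 2 = 0 := eq_zero_of_eq_neg h2 (by simpa [negLastTwo] using (congrFun hv 2).symm)
    have hv3 : v 3 = 0 := eq_zero_of_eq_neg h2 (by simpa [negLastTwo] using (congrFun hv 3).symm)
    have hv0 : v 0 = 0 := pow_eq_zero_iff two_ne_zero |>.mp (by rw [e0, hv2]; ring)
    have hv1 : v 1 = 0 := pow_eq_zero_iff two_ne_zero |>.mp (by rw [e1, hv3]; ring)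
    ext i
    fin_cases i <;> simp [hv0, hv1, hv2, hv3]
  · rintro rfl
    exact ⟨by simp [twoPlanes], by ext i; fin_cases i <;> simp [negLastTwo]⟩

theorem diagLine_eq_range :
    diagLine K = Set.range fun v (_ : Fin 4) => eval v (X 0 : MvPolynomial (Fin 1) K) := by
  ext v
  simp only [diagLine, eval_X, Set.mem_ofPred_eq, Set.mem_range]
  constructor
  · rintro ⟨h0, h1, h01⟩
    exact ⟨fun _ => v 0, by ext i; fin_cases i <;> simp [← h0, ← h1, ← h01]⟩
  · rintro ⟨w, rfl⟩
    simp

theorem diagPlane_eq_range :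
    diagPlane K = Set.range fun v i => eval v
      ((![X 0, X 1, X 0, X 1] : Fin 4 → MvPolynomial (Fin 2) K) i) := by
  ext v
  simp only [diagPlane, Set.mem_ofPred_eq, Set.mem_range]
  constructor
  · rintro ⟨h0, h1⟩
    exact ⟨![v 0, v 1], by ext i; fin_cases i <;> simp [h0, h1]⟩
  · rintro ⟨w, rfl⟩
    simp

theorem two_le_codimIn_twoPlanes_zero [Infinite K] : 2 ≤ codimIn (twoPlanes K) {0} := by
  have hLP : diagLine K ⊆ diagPlane K := fun v hv => ⟨hv.1, hv.2.1⟩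
  have h0L : {0} ⊆ diagLine K := by rintro _ rfl; simp [diagLine]
  have hPX : diagPlane K ⊆ twoPlanes K := diagPlane_subset_twoPlanes
  have hLi : IsIrreducible (diagLine K) := by
    rw [diagLine_eq_range]; exact isIrreducible_range_eval_polys _
  have hPi : IsIrreducible (diagPlane K) := by
    rw [diagPlane_eq_range]; exact isIrreducible_range_eval_polys _
  have hLc : IsClosed (diagLine K) := (isClosed_setOf_apply_eq_apply 0 2).inter
    ((isClosed_setOf_apply_eq_apply 1 3).inter (isClosed_setOf_apply_eq_apply 0 1))
  have hPc : IsClosed (diagPlane K) :=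
    (isClosed_setOf_apply_eq_apply 0 2).inter (isClosed_setOf_apply_eq_apply 1 3)
  let Z₀ := IrreducibleCloseds.ofSubset (h0L.trans (hLP.trans hPX)) isIrreducible_singleton
    isClosed_singleton
  let Z₁ := IrreducibleCloseds.ofSubset (hLP.trans hPX) hLi hLc
  let Z₂ := IrreducibleCloseds.ofSubset hPX hPi hPc
  have h01 : Z₀ < Z₁ := IrreducibleCloseds.ofSubset_lt_ofSubset _ _
    ((Set.ssubset_iff_of_subset h0L).mpr ⟨1, by simp [diagLine], by simp⟩) _ _ _ _
  have h12 : Z₁ < Z₂ := IrreducibleCloseds.ofSubset_lt_ofSubset _ _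
    ((Set.ssubset_iff_of_subset hLP).mpr
      ⟨![0, 1, 0, 1], by simp [diagPlane], by simp [diagLine]⟩) _ _ _ _
  have hA : (Subtype.val ⁻¹' {0} : Set (twoPlanes K)).Subsingleton :=
    fun x hx y hy => Subtype.ext (hx.trans hy.symm)
  calc (2 : ℕ∞) ≤ Order.coheight Z₂ + 1 + 1 := by
        rw [add_assoc]; exact le_add_self
    _ ≤ Order.coheight Z₁ + 1 := by gcongr; exact Order.coheight_add_one_le h12
    _ ≤ Order.coheight Z₀ := Order.coheight_add_one_le h01
    _ ≤ codimIn (twoPlanes K) {0} := coheight_le_codimIn hA fun _ hx => hx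

def diagLift (a b : K) : twoPlanes K :=
  ⟨![a, b, a, b], diagPlane_subset_twoPlanes ⟨rfl, rfl⟩⟩

theorem apply_eq_apply_diagLift {f : twoPlanes K → K}
    (hf : ∀ x y : twoPlanes K, negLastTwo (x : Fin 4 → K) = y → f y = f x) (x : twoPlanes K) :
    f x = f (diagLift (x.1 0) (x.1 1)) := by
  rcases twoPlanes_eq_union.subset x.2 with ⟨h0, h1⟩ | ⟨h0, h1⟩
  · congr
    ext i
    fin_cases i <;> simp [diagLift, h0, h1]
  · refine hf _ _ ?_
    ext i
    fin_cases i <;> simp [diagLift, negLastTwo, h0, h1]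

theorem setOf_isRegularFn_invariant_eq_adjoin :
    {f : twoPlanes K → K | IsRegularFn (twoPlanes K) f ∧
      ∀ x y : twoPlanes K, negLastTwo (x : Fin 4 → K) = y → f y = f x} =
      ↑(Algebra.adjoin K {fun x : twoPlanes K => x.1 0, fun x : twoPlanes K => x.1 1}) := by
  ext f
  rw [← Matrix.range_cons_cons_empty _ _ ![], SetLike.mem_coe, mem_adjoin_range_iff_exists_eval]
  constructor
  · rintro ⟨⟨p, hp⟩, hinv⟩
    refine ⟨bind₁ ![X 0, X 1, X 0, X 1] p, fun x => ?_⟩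
    rw [apply_eq_apply_diagLift hinv x, hp, eval_bind₁]
    exact congrArg (eval · p) (funext fun i => by fin_cases i <;> simp [diagLift])
  · rintro ⟨q, hq⟩
    refine ⟨⟨bind₁ ![X 0, X 1] q, fun x => ?_⟩, fun x y hxy => ?_⟩
    · rw [hq, eval_bind₁]
      exact congrArg (eval · q) (funext fun i => by fin_cases i <;> simp)
    · rw [hq, hq]
      exact congrArg (eval · q) (funext fun i => by fin_cases i <;> simp [← hxy, negLastTwo])

theorem algebraicIndependent_twoPlanes_coords [Infinite K] :
    AlgebraicIndependent K ![fun x : twoPlanes K => x.1 0, fun x : twoPlanes K => x.1 1] :=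
  algebraicIndependent_of_surjective _ fun z =>
    ⟨diagLift (z 0) (z 1), by ext i; fin_cases i <;> rfl⟩

end TwoPlanes

/-- The example of the union of two planes in `K^4` (char K ≠ 2): `X` is the
union of two planes meeting only at the origin, the nontrivial element `g` of
the order-2 group `G = ⟨diag(1,1,-1,-1)⟩` interchanges the two planes and fixes
only the origin (so it is not a reflection on `X`, whence `G` is not generated
by reflections on `X`), yet the invariant ring `K[X]^G` is the polynomial ring
generated by the images of `x₁` and `x₂`. -/
theorem two_planes_example (K : Type*) [Field K] [IsAlgClosed K] (h2 : (2 : K) ≠ 0)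
    (g : (Fin 4 → K) → (Fin 4 → K)) (hg : g = fun v => ![v 0, v 1, -v 2, -v 3])
    (X P₁ P₂ : Set (Fin 4 → K))
    (hXdef : X = {v | v 0 ^ 2 = v 2 ^ 2 ∧ v 1 ^ 2 = v 3 ^ 2 ∧
      v 0 * v 1 = v 2 * v 3 ∧ v 0 * v 3 = v 1 * v 2})
    (hP₁ : P₁ = {v | v 0 = v 2 ∧ v 1 = v 3})
    (hP₂ : P₂ = {v | v 0 = -v 2 ∧ v 1 = -v 3}) :
    X = P₁ ∪ P₂ ∧
    P₁ ∩ P₂ = {0} ∧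
    g '' P₁ = P₂ ∧ g '' P₂ = P₁ ∧
    {v ∈ X | g v = v} = {0} ∧
    ¬ codimIn X {v ∈ X | g v = v} ≤ 1 ∧
    {f : ↥X → K | IsRegularFn X f ∧ ∀ x y : ↥X, g ↑x = ↑y → f y = f x} =
      ↑(Algebra.adjoin K {(fun x : ↥X => (x : Fin 4 → K) 0),
        (fun x : ↥X => (x : Fin 4 → K) 1)}) ∧
    AlgebraicIndependent K
      ![(fun x : ↥X => (x : Fin 4 → K) 0), (fun x : ↥X => (x : Fin 4 → K) 1)] := by
  obtain rfl : g = negLastTwo := hg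
  obtain rfl : X = twoPlanes K := hXdef
  obtain rfl : P₁ = diagPlane K := hP₁
  obtain rfl : P₂ = antidiagPlane K := hP₂
  have hfix := setOf_mem_twoPlanes_negLastTwo_eq_self h2
  refine ⟨twoPlanes_eq_union, diagPlane_inter_antidiagPlane h2, image_negLastTwo_diagPlane,
    image_negLastTwo_antidiagPlane, hfix, ?_, setOf_isRegularFn_invariant_eq_adjoin,
    algebraicIndependent_twoPlanes_coords⟩
  rw [hfix]
  exact fun h => absurd (two_le_codimIn_twoPlanes_zero.trans h) (by norm_num)
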